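/- arXiv:2402.18983 — 2 statements merged into one kernel-verified Lean document; each statement's English description precedes it below -/
import Mathlib

section
/- Let 𝓘^post(a,c) = 3/4 + 3c/2 + (c²/2)log c - ((c+1)²/2)log(c+1) - ca² and let 𝓘^pre(a,c) be the pre-critical energy (defined via q = q(a)). Then d/da(𝓘^pre(a,c) - 𝓘^post(a,c)) = (1-q²)²(1-a⁴q⁴)/(2aq⁴), which is strictly positive when 0 < q < 1 and 0 < a²q² < 1. Consequently, since equality holds at a = a_cri, 𝓘^post(a,c) ≤ 𝓘^pre(a,c) for all a ≥ a_cri. -/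
/-- The post-critical energy `𝓘^post(a,c)`. -/
noncomputable def Ipost (c a : ℝ) : ℝ :=
  3/4 + 3 * c / 2 + (c ^ 2 / 2) * Real.log c - ((c + 1) ^ 2 / 2) * Real.log (c + 1) - c * a ^ 2

/-- The pre-critical energy `𝓘^pre(a,c)` as a function of `a`, `q = q(a)`. -/
noncomputable def Ipre (c a q : ℝ) : ℝ :=
  3/8 + a ^ 2 / 8 + 3 / (8 * a ^ 2 * q ^ 4) - 5 / (8 * q ^ 2)
    + (3/4 + a ^ 2 / 8) * a ^ 2 * q ^ 2 - 3 * a ^ 4 * q ^ 4 / 8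
    + Real.log (2 * a * q) + 2 * c * Real.log (2 * a * q ^ 2)
    + c ^ 2 * Real.log (1 + a ^ 2 * q ^ 2 - 2 * a ^ 2 * q ^ 4)
    - (c + 1) ^ 2 * Real.log (1 + a ^ 2 * q ^ 2)

lemma cubic_clear (c x Q : ℝ) (hx0 : x ≠ 0)
    (h : Q ^ 6 - ((x ^ 2 + 4 * c + 2) / (2 * x ^ 2)) * Q ^ 4 + 1 / (2 * x ^ 4) = 0) :
    2 * x ^ 4 * Q ^ 6 - x ^ 2 * (x ^ 2 + 4 * c + 2) * Q ^ 4 + 1 = 0 := by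
  field_simp at h
  have h2 : (2 * x ^ 2) * (2 * x ^ 4 * Q ^ 6 - x ^ 2 * (x ^ 2 + 4 * c + 2) * Q ^ 4 + 1)
      = 0 := by linear_combination (2 * x ^ 2) * h
  rcases mul_eq_zero.mp h2 with h3 | h3
  · exact absurd h3 (by positivity)
  · exact h3

lemma qderiv (c acri : ℝ) (q : ℝ → ℝ) (hacri0 : 0 < acri)
    (hcubic : ∀ a > acri,
      q a ^ 6 - ((a ^ 2 + 4 * c + 2) / (2 * a ^ 2)) * q a ^ 4 + 1 / (2 * a ^ 4) = 0)
    (hdiff : ∀ a > acri, DifferentiableAt ℝ q a)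
    (a : ℝ) (ha : acri < a)
    (hane : a ≠ 0) (hdenne : a ^ 4 * q a ^ 6 - 1 ≠ 0) :
    HasDerivAt q (q a * (1 + a ^ 4 * q a ^ 4 - 2 * a ^ 4 * q a ^ 6) /
      (2 * a * (a ^ 4 * q a ^ 6 - 1))) a := by
  have hq' : HasDerivAt q (deriv q a) a := (hdiff a ha).hasDerivAt
  have clear : ∀ x, acri < x →
      2 * x ^ 4 * q x ^ 6 - x ^ 2 * (x ^ 2 + 4 * c + 2) * q x ^ 4 + 1 = 0 := fun x hx =>
    cubic_clear c x (q x) (ne_of_gt (lt_trans hacri0 hx)) (hcubic x hx)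
  have hgev : (fun x => 2 * x ^ 4 * q x ^ 6 - x ^ 2 * (x ^ 2 + 4 * c + 2) * q x ^ 4 + 1)
      =ᶠ[nhds a] (fun _ => (0:ℝ)) := by
    filter_upwards [Ioi_mem_nhds ha] with x hx
    exact clear x hx
  have hg0 : HasDerivAt (fun x => 2 * x ^ 4 * q x ^ 6 - x ^ 2 * (x ^ 2 + 4 * c + 2) * q x ^ 4 + 1)
      0 a := (hasDerivAt_const a (0:ℝ)).congr_of_eventuallyEq hgev
  have h1 : HasDerivAt (fun x : ℝ => 2 * x ^ 4) (2 * ((4:ℕ) * a ^ 3)) a :=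
    (hasDerivAt_pow 4 a).const_mul 2
  have h2 : HasDerivAt (fun x : ℝ => x ^ 2 * (x ^ 2 + 4 * c + 2))
      (((2:ℕ) * a ^ 1) * (a ^ 2 + 4 * c + 2) + a ^ 2 * ((2:ℕ) * a ^ 1)) a :=
    (hasDerivAt_pow 2 a).mul (((hasDerivAt_pow 2 a).add_const (4 * c)).add_const 2)
  have hg : HasDerivAt
      (fun x => 2 * x ^ 4 * q x ^ 6 - x ^ 2 * (x ^ 2 + 4 * c + 2) * q x ^ 4 + 1)
      ((2 * ((4:ℕ) * a ^ 3)) * q a ^ 6 + (2 * a ^ 4) * ((6:ℕ) * q a ^ 5 * deriv q a)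
       - ((((2:ℕ) * a ^ 1) * (a ^ 2 + 4 * c + 2) + a ^ 2 * ((2:ℕ) * a ^ 1)) * q a ^ 4
          + a ^ 2 * (a ^ 2 + 4 * c + 2) * ((4:ℕ) * q a ^ 3 * deriv q a))) a :=
    ((h1.mul (hq'.pow 6)).sub (h2.mul (hq'.pow 4))).add_const 1
  have hD0 := hg.unique hg0
  push_cast at hD0
  have hcub := clear a ha
  have h2a : (2:ℝ) * a * (a ^ 4 * q a ^ 6 - 1) ≠ 0 := by
    intro h
    rcases mul_eq_zero.mp h with h | h
    · rcases mul_eq_zero.mp h with h | h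
      · norm_num at h
      · exact hane h
    · exact hdenne h
  have hdval : deriv q a = q a * (1 + a ^ 4 * q a ^ 4 - 2 * a ^ 4 * q a ^ 6) /
      (2 * a * (a ^ 4 * q a ^ 6 - 1)) := by
    rw [eq_div_iff h2a]
    linear_combination (a * q a / 2) * hD0 + (-(q a) - 2 * a * deriv q a) * hcub
  rw [hdval] at hq'
  exact hq'

set_option maxHeartbeats 2000000 in
lemma bigderiv (c a p : ℝ) (q : ℝ → ℝ) (hq : HasDerivAt q p a)
    (hane : a ≠ 0) (hQne : q a ≠ 0)
    (hN1 : 1 + a ^ 2 * q a ^ 2 - 2 * a ^ 2 * q a ^ 4 ≠ 0)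
    (hN2 : 1 + a ^ 2 * q a ^ 2 ≠ 0)
    (hdenne : a ^ 4 * q a ^ 6 - 1 ≠ 0)
    (hcub : 2 * a ^ 4 * q a ^ 6 - a ^ 2 * (a ^ 2 + 4 * c + 2) * q a ^ 4 + 1 = 0)
    (hp : p = q a * (1 + a ^ 4 * q a ^ 4 - 2 * a ^ 4 * q a ^ 6) /
      (2 * a * (a ^ 4 * q a ^ 6 - 1))) :
    HasDerivAt (fun x => Ipre c x (q x) - Ipost c x)
      ((1 - q a ^ 2) ^ 2 * (1 - a ^ 4 * q a ^ 4) / (2 * a * q a ^ 4)) a := by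
  have hx2 := hasDerivAt_pow 2 a
  have hx4 := hasDerivAt_pow 4 a
  have hq2 := hq.pow 2
  have hq4 := hq.pow 4
  have hd3ne : 8 * a ^ 2 * q a ^ 4 ≠ 0 := by positivity
  have h8q2ne : 8 * q a ^ 2 ≠ 0 := by positivity
  have h2aqne : 2 * a * q a ≠ 0 := by positivity
  have h2aq2ne : 2 * a * q a ^ 2 ≠ 0 := by positivity
  have t1 := (hx2.div_const 8).const_add (3/8)
  have t3 := (hasDerivAt_const a (3:ℝ)).div ((hx2.const_mul 8).mul hq4) hd3ne
  have t4 := (hasDerivAt_const a (5:ℝ)).div (hq2.const_mul 8) h8q2ne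
  have t5 := (((hx2.div_const 8).const_add (3/4)).mul hx2).mul hq2
  have t6 := ((hx4.const_mul 3).mul hq4).div_const 8
  have t7 := (((hasDerivAt_id a).const_mul 2).mul hq).log h2aqne
  have t8 := ((((hasDerivAt_id a).const_mul 2).mul hq2).log h2aq2ne).const_mul (2*c)
  have t9 := ((((hx2.mul hq2).const_add 1).sub
      ((hx2.const_mul 2).mul hq4)).log hN1).const_mul (c^2)
  have t10 := (((hx2.mul hq2).const_add 1).log hN2).const_mul ((c+1)^2)
  have tpost := (hasDerivAt_const a
      (3/4 + 3 * c / 2 + (c ^ 2 / 2) * Real.log c - ((c + 1) ^ 2 / 2) * Real.log (c + 1))).sub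
      (hx2.const_mul c)
  have H := ((((((((t1.add t3).sub t4).add t5).sub t6).add t7).add t8).add t9).sub t10).sub tpost
  convert H using 1
  case e'_4 => rfl
  case e'_5 => rfl
  case e'_8 => rfl
  simp only [id_eq, Pi.mul_apply, Pi.pow_apply, Pi.div_apply, Pi.add_apply, Pi.sub_apply]
  have hcsub : c = (2 * a ^ 4 * q a ^ 6 - a ^ 4 * q a ^ 4 - 2 * a ^ 2 * q a ^ 4 + 1) /
      (4 * a ^ 2 * q a ^ 4) := by
    rw [eq_div_iff (by positivity)]
    linear_combination -hcub
  rw [hp, hcsub]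
  push_cast
  have e1 : (-1 + q a ^ 6 * a ^ 4) ≠ 0 := by intro h; apply hdenne; linear_combination h
  have e2 : (1 + q a ^ 2 * a ^ 2 - q a ^ 4 * a ^ 2 * 2) ≠ 0 := by intro h; apply hN1; linear_combination h
  have e3 : q a ^ 6 * a ^ 4 - 1 ≠ 0 := by intro h; apply hdenne; linear_combination h
  field_simp
  ring

set_option maxHeartbeats 1000000 in
/-- The derivative of `𝓘^pre - 𝓘^post` equals `(1-q²)²(1-a⁴q⁴)/(2aq⁴) > 0`, and consequently
(with equality at `a_cri`) `𝓘^post(a,c) ≤ 𝓘^pre(a,c)` for all `a ≥ a_cri`. -/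
theorem energy_inequality (c : ℝ) (hc : 0 < c) (q : ℝ → ℝ)
    (acri : ℝ) (hacri : acri = Real.sqrt (c + 1) - Real.sqrt c)
    (hcubic : ∀ a > acri,
      q a ^ 6 - ((a ^ 2 + 4 * c + 2) / (2 * a ^ 2)) * q a ^ 4 + 1 / (2 * a ^ 4) = 0)
    (hq01 : ∀ a > acri, 0 < q a ∧ q a < 1)
    (haq : ∀ a > acri, a * q a < 1)
    (hdiff : ∀ a > acri, DifferentiableAt ℝ q a)
    (hcont : ContinuousOn (fun a => Ipre c a (q a)) (Set.Ici acri))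
    (heq : Ipre c acri (q acri) = Ipost c acri) :
    (∀ a > acri,
      HasDerivAt (fun x => Ipre c x (q x) - Ipost c x)
          ((1 - q a ^ 2) ^ 2 * (1 - a ^ 4 * q a ^ 4) / (2 * a * q a ^ 4)) a ∧
        0 < (1 - q a ^ 2) ^ 2 * (1 - a ^ 4 * q a ^ 4) / (2 * a * q a ^ 4)) ∧
    ∀ a, acri ≤ a → Ipost c a ≤ Ipre c a (q a) := by
  have hacri0 : 0 < acri := by
    rw [hacri]
    have h1 : Real.sqrt c < Real.sqrt (c + 1) :=
      Real.sqrt_lt_sqrt hc.le (lt_add_one c)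
    linarith
  have key : ∀ a > acri,
      HasDerivAt (fun x => Ipre c x (q x) - Ipost c x)
          ((1 - q a ^ 2) ^ 2 * (1 - a ^ 4 * q a ^ 4) / (2 * a * q a ^ 4)) a ∧
        0 < (1 - q a ^ 2) ^ 2 * (1 - a ^ 4 * q a ^ 4) / (2 * a * q a ^ 4) := by
    intro a ha
    have ha0 : 0 < a := lt_trans hacri0 ha
    obtain ⟨hQ0, hQ1⟩ := hq01 a ha
    have haQ1 := haq a ha
    have haQ0 : 0 < a * q a := mul_pos ha0 hQ0
    have hane : a ≠ 0 := ne_of_gt ha0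
    have hQne : q a ≠ 0 := ne_of_gt hQ0
    have haq4 : a ^ 4 * q a ^ 4 = (a * q a) ^ 4 := by ring
    have haq4lt : a ^ 4 * q a ^ 4 < 1 := by
      rw [haq4]; exact pow_lt_one₀ haQ0.le haQ1 (by norm_num)
    have hq2lt : q a ^ 2 < 1 := pow_lt_one₀ hQ0.le hQ1 (by norm_num)
    have hdenlt : a ^ 4 * q a ^ 6 < 1 := by nlinarith
    have hdenne : a ^ 4 * q a ^ 6 - 1 ≠ 0 := ne_of_lt (by linarith)
    have hN1 : (0:ℝ) < 1 + a ^ 2 * q a ^ 2 - 2 * a ^ 2 * q a ^ 4 := by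
      have e1 : a ^ 2 * q a ^ 2 < 1 := by nlinarith
      have e2 : a ^ 2 * q a ^ 4 < q a ^ 2 := by
        nlinarith [mul_lt_mul_of_pos_right e1 (pow_pos hQ0 2)]
      have e3 : a ^ 2 * q a ^ 4 < a ^ 2 * q a ^ 2 := by
        nlinarith [mul_lt_mul_of_pos_left hq2lt (pow_pos ha0 2), pow_pos hQ0 2]
      nlinarith [pow_pos hQ0 2]
    have hN2 : (0:ℝ) < 1 + a ^ 2 * q a ^ 2 := by positivity
    have hcub := cubic_clear c a (q a) hane (hcubic a ha)
    have hqd := qderiv c acri q hacri0 hcubic hdiff a ha hane hdenne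
    have hbig := bigderiv c a _ q hqd hane hQne (ne_of_gt hN1) (ne_of_gt hN2) hdenne hcub rfl
    refine ⟨hbig, ?_⟩
    apply div_pos
    · apply mul_pos
      · have : (0:ℝ) < 1 - q a ^ 2 := by linarith
        positivity
      · linarith
    · positivity
  refine ⟨key, ?_⟩
  have hcontpost : Continuous (fun a : ℝ => Ipost c a) :=
    continuous_const.sub (continuous_const.mul (continuous_pow 2))
  have hcontf : ContinuousOn (fun x => Ipre c x (q x) - Ipost c x) (Set.Ici acri) :=
    hcont.sub hcontpost.continuousOn
  have hmono : StrictMonoOn (fun x => Ipre c x (q x) - Ipost c x) (Set.Ici acri) := by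
    apply strictMonoOn_of_deriv_pos (convex_Ici acri) hcontf
    intro x hx
    rw [interior_Ici] at hx
    rw [(key x hx).1.deriv]
    exact (key x hx).2
  intro a ha'
  rcases eq_or_lt_of_le ha' with h | h
  · rw [← h]; linarith [heq.le, heq.ge]
  · have h2 : Ipre c acri (q acri) - Ipost c acri < Ipre c a (q a) - Ipost c a :=
      hmono Set.self_mem_Ici (Set.mem_Ici.mpr ha') h
    have h3 : Ipre c acri (q acri) - Ipost c acri = 0 := by rw [heq]; ring
    linarith
end

section
/- Define Φ(t;α) = α²(𝓘^pre(√(t/α),1/α) - 𝓘^post(√(t/α),1/α)). Then as t → ∞, Φ(t;α) = t - α log t + O(1); in particular Φ(t;α)/t → 1. -/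
open Filter Asymptotics

private lemma key_aux (P c Q : ℝ) (hP : 0 < P)
    (hcub : Q ^ 6 - ((P + 4 * c + 2) / (2 * P)) * Q ^ 4 + 1 / (2 * P ^ 2) = 0) :
    (P * Q ^ 2) ^ 2 * (2 * c + 1 - P * Q ^ 2) = P * (1 - (P * Q ^ 2) ^ 2) / 2 := by
  have hP' : P ≠ 0 := ne_of_gt hP
  field_simp at hcub ⊢
  nlinarith [hcub, sq_nonneg P]

set_option maxHeartbeats 1600000 in
/-- As `t → ∞`, the rate function `Φ(t;α) = α²(𝓘^pre(√(t/α),1/α) - 𝓘^post(√(t/α),1/α))`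
satisfies `Φ(t;α) = t - α log t + O(1)`; in particular `Φ(t;α)/t → 1`. -/
theorem rate_function_at_infinity (α : ℝ) (hα : 0 < α) (q : ℝ → ℝ)
    (hq : ∀ᶠ t in atTop,
      0 < q t ∧ q t < 1 ∧ Real.sqrt (t / α) * q t < 1 ∧
        q t ^ 6 - ((Real.sqrt (t / α) ^ 2 + 4 * (1 / α) + 2) / (2 * Real.sqrt (t / α) ^ 2))
          * q t ^ 4 + 1 / (2 * Real.sqrt (t / α) ^ 4) = 0) :
    ((fun t =>
        α ^ 2 * (Ipre (1 / α) (Real.sqrt (t / α)) (q t) - Ipost (1 / α) (Real.sqrt (t / α)))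
          - (t - α * Real.log t)) =O[atTop] fun _ => (1 : ℝ)) ∧
    Tendsto (fun t =>
        α ^ 2 * (Ipre (1 / α) (Real.sqrt (t / α)) (q t) - Ipost (1 / α) (Real.sqrt (t / α))) / t)
      atTop (nhds 1) := by
  have hα' : α ≠ 0 := ne_of_gt hα
  set u : ℝ → ℝ := fun t => (Real.sqrt (t / α) * q t) ^ 2 with hu_def
  set c : ℝ := 1 / α with hc_def
  have hc : 0 < c := by positivity
  -- basic eventual facts, including the bounds from the cubic constraint
  have hfacts : ∀ᶠ t in atTop,
      0 < t ∧ 0 < q t ∧ q t < 1 ∧ 0 < u t ∧ u t < 1 ∧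
      1 - u t ≤ 2 * (2 * c + 1) / (t / α) ∧
      (t / α) * (1 - u t) ^ 2 ≤ 2 * (2 * c + 1) * (1 - u t) := by
    filter_upwards [hq, eventually_gt_atTop 0] with t hqt ht0
    obtain ⟨hq0, hq1, hv1, hcub⟩ := hqt
    have htα : 0 < t / α := div_pos ht0 hα
    have hA2 : Real.sqrt (t / α) ^ 2 = t / α := Real.sq_sqrt htα.le
    have hA0 : 0 < Real.sqrt (t / α) := Real.sqrt_pos.mpr htα
    have hv0 : 0 < Real.sqrt (t / α) * q t := by positivity
    have hu0 : 0 < u t := by simp only [hu_def]; positivity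
    have hu1 : u t < 1 := by
      simpa only [hu_def, one_pow] using pow_lt_pow_left₀ hv1 hv0.le two_ne_zero
    have h4 : Real.sqrt (t / α) ^ 4 = (t / α) ^ 2 := by
      rw [show Real.sqrt (t / α) ^ 4 = (Real.sqrt (t / α) ^ 2) ^ 2 by ring, hA2]
    rw [h4, hA2] at hcub
    have hu_eq : u t = (t / α) * q t ^ 2 := by
      simp only [hu_def, mul_pow, hA2]
    have key : u t ^ 2 * (2 * c + 1 - u t) = (t / α) * (1 - u t ^ 2) / 2 := by
      rw [hu_eq]
      exact key_aux (t / α) c (q t) htα hcub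
    have h1 : (t / α) * (1 - u t) ≤ 2 * (2 * c + 1) := by
      nlinarith [mul_nonneg htα.le (mul_nonneg hu0.le (sub_nonneg.mpr hu1.le))]
    refine ⟨ht0, hq0, hq1, hu0, hu1, ?_, ?_⟩
    · rw [le_div_iff₀ htα]; linarith [h1]
    · nlinarith [mul_le_mul_of_nonneg_right h1 (sub_nonneg.mpr hu1.le)]
  -- limits
  have hPtop : Tendsto (fun t => t / α) atTop atTop :=
    Tendsto.atTop_div_const hα tendsto_id
  have hz : Tendsto (fun t => 2 * (2 * c + 1) / (t / α)) atTop (nhds 0) :=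
    Tendsto.div_atTop tendsto_const_nhds hPtop
  have hu_lim : Tendsto u atTop (nhds 1) := by
    have hlow : Tendsto (fun t => 1 - 2 * (2 * c + 1) / (t / α)) atTop (nhds 1) := by
      have h : Tendsto (fun t => (1:ℝ) - 2 * (2 * c + 1) / (t / α)) atTop (nhds (1 - 0)) :=
        tendsto_const_nhds.sub hz
      simpa using h
    refine tendsto_of_tendsto_of_tendsto_of_le_of_le' hlow tendsto_const_nhds ?_ ?_
    · filter_upwards [hfacts] with t ht; linarith [ht.2.2.2.2.2.1]
    · filter_upwards [hfacts] with t ht; linarith [ht.2.2.2.2.1]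
  have hA_lim : Tendsto (fun t => (t / α) * (1 - u t) ^ 2) atTop (nhds 0) := by
    have hup : Tendsto (fun t => 2 * (2 * c + 1) * (1 - u t)) atTop (nhds 0) := by
      have hsub : Tendsto (fun t => 1 - u t) atTop (nhds (1 - 1)) :=
        tendsto_const_nhds.sub hu_lim
      have h := hsub.const_mul (2 * (2 * c + 1))
      simpa using h
    refine tendsto_of_tendsto_of_tendsto_of_le_of_le' tendsto_const_nhds hup ?_ ?_
    · filter_upwards [hfacts] with t ht
      have htα : 0 < t / α := div_pos ht.1 hα
      positivity
    · filter_upwards [hfacts] with t ht; exact ht.2.2.2.2.2.2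
  -- the comparison function F and its limit
  set F : ℝ → ℝ := fun t =>
      α ^ 2 * ( (t/α) * (1 - u t) ^ 2 * (u t + 3) / (8 * (u t) ^ 2)
        + 3/8 + 3 * u t / 4 - 3 * (u t) ^ 2 / 8 - 3/4
        - 3 * c / 2
        + (1 + 2 * c) * Real.log 2
        + (1/2 + 2 * c) * Real.log (u t)
        + c ^ 2 * Real.log (1 + u t - 2 * (u t) ^ 2 / (t/α))
        - (c + 1) ^ 2 * Real.log (1 + u t)
        - c ^ 2 / 2 * Real.log c
        + (c + 1) ^ 2 / 2 * Real.log (c + 1) )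
      + α * Real.log α with hF_def
  set L : ℝ := α ^ 2 * (0 * (1 + 3) / (8 * 1 ^ 2) + 3/8 + 3 * 1 / 4 - 3 * 1 ^ 2 / 8 - 3/4
      - 3 * c / 2 + (1 + 2 * c) * Real.log 2 + (1/2 + 2 * c) * Real.log 1
      + c ^ 2 * Real.log (1 + 1 - 0) - (c + 1) ^ 2 * Real.log (1 + 1)
      - c ^ 2 / 2 * Real.log c + (c + 1) ^ 2 / 2 * Real.log (c + 1)) + α * Real.log α
    with hL_def
  have hFlim : Tendsto F atTop (nhds L) := by
    rw [hF_def, hL_def]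
    refine Tendsto.add (Tendsto.const_mul _ ?_) tendsto_const_nhds
    have hr : Tendsto (fun t => (t/α) * (1 - u t) ^ 2 * (u t + 3) / (8 * (u t) ^ 2)) atTop
        (nhds (0 * (1 + 3) / (8 * 1 ^ 2))) :=
      (hA_lim.mul (hu_lim.add_const 3)).div ((hu_lim.pow 2).const_mul 8) (by norm_num)
    have hu34 : Tendsto (fun t => 3 * u t / 4) atTop (nhds (3 * 1 / 4)) :=
      (hu_lim.const_mul 3).div_const 4
    have hu38 : Tendsto (fun t => 3 * (u t) ^ 2 / 8) atTop (nhds (3 * 1 ^ 2 / 8)) :=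
      ((hu_lim.pow 2).const_mul 3).div_const 8
    have hlogu : Tendsto (fun t => Real.log (u t)) atTop (nhds (Real.log 1)) :=
      (Real.continuousAt_log one_ne_zero).tendsto.comp hu_lim
    have hinner : Tendsto (fun t => 1 + u t - 2 * (u t) ^ 2 / (t/α)) atTop
        (nhds (1 + 1 - 0)) := by
      refine (tendsto_const_nhds.add hu_lim).sub ?_
      exact Tendsto.div_atTop ((hu_lim.pow 2).const_mul 2) hPtop
    have hlogX : Tendsto (fun t => Real.log (1 + u t - 2 * (u t) ^ 2 / (t/α))) atTop
        (nhds (Real.log (1 + 1 - 0))) :=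
      (Real.continuousAt_log (by norm_num)).tendsto.comp hinner
    have hlogY : Tendsto (fun t => Real.log (1 + u t)) atTop
        (nhds (Real.log (1 + 1))) :=
      (Real.continuousAt_log (by norm_num)).tendsto.comp (tendsto_const_nhds.add hu_lim)
    exact (((((((((((hr.add tendsto_const_nhds).add hu34).sub hu38).sub
      tendsto_const_nhds).sub tendsto_const_nhds).add tendsto_const_nhds).add
      (hlogu.const_mul _)).add (hlogX.const_mul _)).sub (hlogY.const_mul _)).sub
      tendsto_const_nhds).add tendsto_const_nhds)
  -- eventual equality between F and the error function
  have heq : ∀ᶠ t in atTop,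
      F t = α ^ 2 * (Ipre (1/α) (Real.sqrt (t/α)) (q t) - Ipost (1/α) (Real.sqrt (t/α)))
        - (t - α * Real.log t) := by
    filter_upwards [hfacts] with t ht
    obtain ⟨ht0, hq0, hq1, hu0, hu1, -, -⟩ := ht
    have htα : 0 < t / α := div_pos ht0 hα
    simp only [hF_def, hu_def, hc_def, Ipre, Ipost]
    set Q := q t with hQ_def
    set A := Real.sqrt (t / α) with hA_def
    have hA0 : 0 < A := Real.sqrt_pos.mpr htα
    have hA2 : A ^ 2 = t / α := Real.sq_sqrt htα.le
    have hA' : A ≠ 0 := ne_of_gt hA0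
    have hQ' : Q ≠ 0 := ne_of_gt hq0
    have ht_eq : t = α * A ^ 2 := by rw [hA2]; field_simp
    have e1 : Real.log (2 * A * Q) = Real.log 2 + (1/2) * Real.log ((A * Q) ^ 2) := by
      rw [Real.log_pow, mul_assoc, Real.log_mul two_ne_zero (by positivity)]
      push_cast; ring
    have e2 : Real.log (2 * A * Q ^ 2) = Real.log 2 + Real.log ((A * Q) ^ 2) - Real.log A := by
      have h : 2 * A * Q ^ 2 = 2 * ((A * Q) ^ 2 / A) := by field_simp
      rw [h, Real.log_mul two_ne_zero (by positivity), Real.log_div (by positivity) hA']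
      ring
    have e3 : Real.log t = Real.log α + 2 * Real.log A := by
      rw [ht_eq, Real.log_mul hα' (by positivity), Real.log_pow]
      push_cast; ring
    rw [e1, e2, e3, ← hA2]
    have e4 : (1 : ℝ) + A ^ 2 * Q ^ 2 - 2 * A ^ 2 * Q ^ 4
        = 1 + (A * Q) ^ 2 - 2 * ((A * Q) ^ 2) ^ 2 / A ^ 2 := by field_simp
    rw [e4]
    have e5 : (1 : ℝ) + A ^ 2 * Q ^ 2 = 1 + (A * Q) ^ 2 := by ring
    rw [e5, ht_eq]
    field_simp
    ring
  have hElim : Tendsto (fun t =>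
      α ^ 2 * (Ipre (1/α) (Real.sqrt (t/α)) (q t) - Ipost (1/α) (Real.sqrt (t/α)))
        - (t - α * Real.log t)) atTop (nhds L) := hFlim.congr' heq
  constructor
  · exact hElim.isBigO_one ℝ
  · have hdiv : Tendsto (fun t =>
        (α ^ 2 * (Ipre (1/α) (Real.sqrt (t/α)) (q t) - Ipost (1/α) (Real.sqrt (t/α)))
          - (t - α * Real.log t)) / t + 1 - α * (Real.log t / t)) atTop
        (nhds (0 + 1 - α * 0)) := by
      refine Tendsto.sub (Tendsto.add ?_ tendsto_const_nhds) ?_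
      · exact Tendsto.div_atTop hElim tendsto_id
      · exact (Real.isLittleO_log_id_atTop.tendsto_div_nhds_zero).const_mul α
    have : Tendsto (fun t =>
        α ^ 2 * (Ipre (1/α) (Real.sqrt (t/α)) (q t) - Ipost (1/α) (Real.sqrt (t/α))) / t)
        atTop (nhds (0 + 1 - α * 0)) := by
      refine hdiv.congr' ?_
      filter_upwards [eventually_gt_atTop 0] with t ht0
      have ht' : t ≠ 0 := ne_of_gt ht0
      field_simp
      ring
    simpa [hc_def] using this
end
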